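/- Let D and D' be Lagrangian subspaces of E and S an isotropic subspace with S ⊆ D'. Then D' ∩ D = D^S ∩ D if and only if D' = D^S, where D^S := (D ∩ S^⊥) + S. -/

import Mathlib

/-- The orthogonal of a subspace `A` with respect to a bilinear form `B`:
`{e | ∀ a ∈ A, B e a = 0}`. -/
def bilinPerp {E : Type*} [AddCommGroup E] [Module ℝ E]
    (B : E →ₗ[ℝ] E →ₗ[ℝ] ℝ) (A : Submodule ℝ E) : Submodule ℝ E where
  carrier := {e | ∀ a ∈ A, B e a = 0}
  add_mem' := by
    intro x y hx hy a ha
    simp only [Set.mem_setOf_eq] at *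
    rw [map_add, LinearMap.add_apply, hx a ha, hy a ha, add_zero]
  zero_mem' := by
    intro a ha
    simp
  smul_mem' := by
    intro c x hx a ha
    simp only [Set.mem_setOf_eq] at *
    rw [map_smul, LinearMap.smul_apply, hx a ha, smul_zero]

/-!
Taking orthogonals turns `D' ⊓ D = D ⊓ Sᗮ` into `D' ⊔ D = D ⊔ S`, so `D' ≤ (D ⊔ S) ⊓ Sᗮ`,
which by the modular law is the stretching `D^S = (D ⊓ Sᗮ) ⊔ S`. The stretching is again
Lagrangian, and a Lagrangian subspace contained in another one equals it.
-/

namespace LinearMap.BilinForm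

section CommRing

variable {R M : Type*} [CommRing R] [AddCommGroup M] [Module R M]

theorem orthogonal_sup (B : LinearMap.BilinForm R M) (N L : Submodule R M) :
    B.orthogonal (N ⊔ L) = B.orthogonal N ⊓ B.orthogonal L := by
  refine le_antisymm (le_inf (B.orthogonal_le le_sup_left) (B.orthogonal_le le_sup_right)) ?_
  rintro x ⟨hxN, hxL⟩ _ hnl
  obtain ⟨n, hn, l, hl, rfl⟩ := Submodule.mem_sup.mp hnl
  simp only [map_add, LinearMap.add_apply, hxN n hn, hxL l hl, add_zero]

theorem eq_of_le_of_orthogonal_eq {B : LinearMap.BilinForm R M} {L L' : Submodule R M}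
    (hL : B.orthogonal L = L) (hL' : B.orthogonal L' = L') (h : L ≤ L') : L = L' :=
  le_antisymm h (hL' ▸ hL ▸ B.orthogonal_le h)

/-- The stretching `D^S` of `D` along `S`. -/
def stretching (B : LinearMap.BilinForm R M) (D S : Submodule R M) : Submodule R M :=
  D ⊓ B.orthogonal S ⊔ S

variable {B : LinearMap.BilinForm R M} {D S : Submodule R M}

theorem stretching_eq_sup_inf (hS : S ≤ B.orthogonal S) :
    B.stretching D S = (D ⊔ S) ⊓ B.orthogonal S := by
  rw [stretching, sup_comm D, sup_inf_assoc_of_le D hS, sup_comm]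

theorem stretching_inf_self (hS : S ≤ B.orthogonal S) :
    B.stretching D S ⊓ D = D ⊓ B.orthogonal S := by
  rw [stretching, sup_inf_assoc_of_le S inf_le_left, sup_eq_left]
  exact le_inf inf_le_right (inf_le_left.trans hS)

end CommRing

variable {K V : Type*} [Field K] [AddCommGroup V] [Module K V] [FiniteDimensional K V]
  {B : LinearMap.BilinForm K V}

theorem orthogonal_inf (hB : B.Nondegenerate) (hB₀ : B.IsRefl) (N L : Submodule K V) :
    B.orthogonal (N ⊓ L) = B.orthogonal N ⊔ B.orthogonal L := by
  conv_lhs => rw [← B.orthogonal_orthogonal hB hB₀ N, ← B.orthogonal_orthogonal hB hB₀ L,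
    ← orthogonal_sup, B.orthogonal_orthogonal hB hB₀]

variable (hB : B.Nondegenerate) (hB₀ : B.IsRefl) {D D' S : Submodule K V}
include hB hB₀

theorem orthogonal_stretching (hD : B.orthogonal D = D) (hS : S ≤ B.orthogonal S) :
    B.orthogonal (B.stretching D S) = B.stretching D S := by
  conv_lhs => rw [stretching, orthogonal_sup, orthogonal_inf hB hB₀, hD,
    B.orthogonal_orthogonal hB hB₀]
  exact (stretching_eq_sup_inf hS).symm

theorem eq_stretching_of_inf_eq (hD : B.orthogonal D = D) (hD' : B.orthogonal D' = D')
    (hS : S ≤ B.orthogonal S) (hSD' : S ≤ D') (h : D' ⊓ D = B.stretching D S ⊓ D) :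
    D' = B.stretching D S := by
  have hsup : D' ⊔ D = D ⊔ S := by
    have := congrArg B.orthogonal (h.trans (stretching_inf_self hS))
    rwa [orthogonal_inf hB hB₀, orthogonal_inf hB hB₀, hD, hD',
      B.orthogonal_orthogonal hB hB₀] at this
  have hle : D' ≤ B.stretching D S := by
    rw [stretching_eq_sup_inf hS]
    exact le_inf (le_sup_left.trans hsup.le) (hD' ▸ B.orthogonal_le hSD')
  exact eq_of_le_of_orthogonal_eq hD' (orthogonal_stretching hB hB₀ hD hS) hle

end LinearMap.BilinForm

open LinearMap.BilinForm

theorem bilinPerp_eq_orthogonal {E : Type*} [AddCommGroup E] [Module ℝ E]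
    {B : E →ₗ[ℝ] E →ₗ[ℝ] ℝ} (hsymm : ∀ x y : E, B x y = B y x) (A : Submodule ℝ E) :
    bilinPerp B A = orthogonal B A := by
  ext x
  exact forall₂_congr fun a _ => by rw [hsymm]

/-- Let `D` and `D'` be Lagrangian subspaces of `E` and `S` an isotropic
subspace with `S ⊆ D'`. Then `D' ∩ D = D^S ∩ D` if and only if `D' = D^S`, where
`D^S := (D ∩ S^⊥) + S`. -/
theorem stretching_closest_iff
    {E : Type*} [AddCommGroup E] [Module ℝ E] [FiniteDimensional ℝ E]
    (B : E →ₗ[ℝ] E →ₗ[ℝ] ℝ)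
    (hsymm : ∀ x y : E, B x y = B y x)
    (hnondeg : ∀ x : E, (∀ y : E, B x y = 0) → x = 0)
    (D D' S : Submodule ℝ E)
    (hD : bilinPerp B D = D)
    (hD' : bilinPerp B D' = D')
    (hS : S ≤ bilinPerp B S)
    (hSD' : S ≤ D') :
    D' ⊓ D = ((D ⊓ bilinPerp B S) ⊔ S) ⊓ D ↔ D' = (D ⊓ bilinPerp B S) ⊔ S := by
  have hB : Nondegenerate B :=
    ⟨hnondeg, fun y h => hnondeg y fun x => (hsymm y x).trans (h x)⟩
  have hB₀ : IsRefl B := fun x y h => hsymm x y ▸ h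
  simp only [bilinPerp_eq_orthogonal hsymm] at hD hD' hS ⊢
  exact ⟨eq_stretching_of_inf_eq hB hB₀ hD hD' hS hSD', fun h => h ▸ rfl⟩
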